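/- Suppose the matrices M_1,…,M_r satisfy conditions (H0), (H1), (H2) and (H3). Then there exist words u, u' ∈ W with σ(u) = σ(u'), o(u) = o(u'), and u ≠ u'. -/

import Mathlib

open Matrix

variable {r : ℕ} {A : Type*}

/-- The `j`-th standard basis vector of `ℤ^r`. -/
def evec (r : ℕ) (j : Fin r) : Fin r → ℤ := fun i => if i = j then 1 else 0

/-- `w` represents a word of shape `m` (only its values on `[0,m]` matter):
`m ≥ 0` and the transition matrices are respected on the box `[0,m]`. -/
def IsWord (M : Fin r → Matrix A A ℤ) (m : Fin r → ℤ) (w : (Fin r → ℤ) → A) : Prop :=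
  0 ≤ m ∧ ∀ (l : Fin r → ℤ) (j : Fin r), 0 ≤ l → l + evec r j ≤ m →
    M j (w (l + evec r j)) (w l) = 1

/-- Two representing functions agree on the box `[0,m]`; this is equality of
words of shape `m`. -/
def AgreeOn (m : Fin r → ℤ) (w w' : (Fin r → ℤ) → A) : Prop :=
  ∀ l : Fin r → ℤ, 0 ≤ l → l ≤ m → w l = w' l

/-- The restriction `w|[k,k+n]`, as a word based at `0`: `(restrictW k w) i = w (i + k)`. -/
def restrictW (k : Fin r → ℤ) (w : (Fin r → ℤ) → A) : (Fin r → ℤ) → A :=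
  fun i => w (i + k)

/-- `w` (a word of shape `m`) is `p`-periodic: the translate `τ_p w`, given by
`(τ_p w)(x) = w (x - p)`, agrees with `w` on `[0,m] ∩ [p,p+m]`. -/
def IsPeriodic (p m : Fin r → ℤ) (w : (Fin r → ℤ) → A) : Prop :=
  ∀ x : Fin r → ℤ, 0 ≤ x → x ≤ m → p ≤ x → x ≤ p + m → w (x - p) = w x

/-- Condition (H0): each `M j` is nonzero. -/
def H0 (M : Fin r → Matrix A A ℤ) : Prop := ∀ j, M j ≠ 0

/-- Condition (H1): unique products of words. -/
def H1 (M : Fin r → Matrix A A ℤ) : Prop :=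
  ∀ (m n : Fin r → ℤ) (u v : (Fin r → ℤ) → A),
    IsWord M m u → IsWord M n v → u m = v 0 →
      (∃ w, IsWord M (m + n) w ∧ AgreeOn m w u ∧ AgreeOn n (restrictW m w) v) ∧
      (∀ w w', IsWord M (m + n) w → AgreeOn m w u → AgreeOn n (restrictW m w) v →
        IsWord M (m + n) w' → AgreeOn m w' u → AgreeOn n (restrictW m w') v →
        AgreeOn (m + n) w w')

/-- Condition (H2): the directed graph on `A` with an edge `a → b` whenever
`M i b a = 1` for some `i` is irreducible. -/
def H2 (M : Fin r → Matrix A A ℤ) : Prop :=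
  ∀ a b : A, Relation.ReflTransGen (fun x y => ∃ i, M i y x = 1) a b

/-- Condition (H3): for each nonzero `p ∈ ℤ^r` there is a non-`p`-periodic word. -/
def H3 (M : Fin r → Matrix A A ℤ) : Prop :=
  ∀ p : Fin r → ℤ, p ≠ 0 → ∃ (m : Fin r → ℤ) (w : (Fin r → ℤ) → A),
    IsWord M m w ∧ ¬ IsPeriodic p m w

/-- Condition (H1a): the matrices commute. -/
def H1a [Fintype A] (M : Fin r → Matrix A A ℤ) : Prop :=
  ∀ i j, M i * M j = M j * M i

/-- Condition (H1b): for `i < j`, the entries of `M i * M j` lie in `{0,1}`. -/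
def H1b [Fintype A] (M : Fin r → Matrix A A ℤ) : Prop :=
  ∀ i j, i < j → ∀ a b : A, (M i * M j) b a = 0 ∨ (M i * M j) b a = 1

/-- Condition (H1c): for `i < j < k`, the entries of `M i * M j * M k` lie in `{0,1}`. -/
def H1c [Fintype A] (M : Fin r → Matrix A A ℤ) : Prop :=
  ∀ i j k, i < j → j < k → ∀ a b : A,
    (M i * M j * M k) b a = 0 ∨ (M i * M j * M k) b a = 1

/-- Condition (H3*). -/
def H3star (M : Fin r → Matrix A A ℤ) : Prop :=
  ∀ (j : Fin r) (m : Fin r → ℤ), m j = 0 → ∀ w : (Fin r → ℤ) → A, IsWord M m w →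
    ∃ u u', IsWord M (m + evec r j) u ∧ IsWord M (m + evec r j) u' ∧
      AgreeOn m u w ∧ AgreeOn m u' w ∧ u (evec r j) ≠ u' (evec r j)

/-- `x` represents the product word `uv` of `u ∈ W_m` and `v ∈ W_n`. -/
def IsProd (M : Fin r → Matrix A A ℤ) (m n : Fin r → ℤ)
    (u v x : (Fin r → ℤ) → A) : Prop :=
  IsWord M (m + n) x ∧ AgreeOn m x u ∧ AgreeOn n (restrictW m x) v


/-!
Suppose, for a contradiction, that a word is determined by its shape and its origin. Then the
one-step words show that every `M i` has at most one `1` per column, while (H0), (H1) and (H2) give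
every letter a successor in a fixed direction `j`; so direction `j` is a map `f : A → A`. Completing
the two-step words `a → f a → d` to squares with (H1) shows that the image of `f` is closed under the
edges of the graph of (H2), hence `f` is onto, hence a permutation of the finite alphabet, and
`f^[c] = id` for some `c > 0`. Every word then reads `f^[c] (w l) = w l` at `l + c • e_j`, i.e. it is
`c • e_j`-periodic, against (H3).
-/

@[simp]
lemma evec_self (j : Fin r) : evec r j j = 1 := if_pos rfl

lemma evec_of_ne {i j : Fin r} (h : i ≠ j) : evec r j i = 0 := if_neg h

lemma evec_nonneg (r : ℕ) (j : Fin r) : (0 : Fin r → ℤ) ≤ evec r j := by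
  intro i
  by_cases h : i = j <;> simp [evec, h]

lemma zero_ne_evec (r : ℕ) (j : Fin r) : (0 : Fin r → ℤ) ≠ evec r j := by
  intro h
  simpa [evec] using congrFun h j

lemma smul_evec_ne_zero {c : ℤ} (hc : c ≠ 0) (j : Fin r) : c • evec r j ≠ 0 := by
  intro h
  simpa [evec, hc] using congrFun h j

lemma eq_and_eq_zero_of_add_evec_le_evec {l : Fin r → ℤ} {i k : Fin r} (hl : 0 ≤ l)
    (h : l + evec r k ≤ evec r i) : k = i ∧ l = 0 := by
  have hk : k = i := by
    by_contra hki
    have := h k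
    have := hl k
    simp only [Pi.add_apply, Pi.zero_apply, evec_self, evec_of_ne hki] at *
    omega
  subst hk
  refine ⟨rfl, funext fun t => ?_⟩
  have := h t
  have := hl t
  by_cases htk : t = k
  · subst htk
    simp only [Pi.add_apply, Pi.zero_apply, evec_self] at *
    omega
  · simp only [Pi.add_apply, Pi.zero_apply, evec_of_ne htk] at *
    omega

def edgeWord (i : Fin r) (a b : A) : (Fin r → ℤ) → A :=
  fun x => if x = evec r i then b else a

@[simp]
lemma edgeWord_zero (i : Fin r) (a b : A) : edgeWord i a b 0 = a :=
  if_neg (zero_ne_evec r i)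

@[simp]
lemma edgeWord_evec (i : Fin r) (a b : A) : edgeWord i a b (evec r i) = b :=
  if_pos rfl

section Words

variable {M : Fin r → Matrix A A ℤ}

lemma isWord_edgeWord {i : Fin r} {a b : A} (hab : M i b a = 1) :
    IsWord M (evec r i) (edgeWord i a b) := by
  refine ⟨evec_nonneg r i, fun l k hl hlk => ?_⟩
  obtain ⟨rfl, rfl⟩ := eq_and_eq_zero_of_add_evec_le_evec hl hlk
  simpa using hab

lemma isWord_const (a : A) : IsWord M 0 (fun _ => a) := by
  refine ⟨le_rfl, fun l k hl hlk => absurd (hlk k) ?_⟩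
  have := hl k
  simp only [Pi.add_apply, Pi.zero_apply, evec_self] at *
  omega

lemma exists_entry_eq_one (hM : ∀ j (a b : A), M j b a = 0 ∨ M j b a = 1) (h0 : H0 M)
    (j : Fin r) : ∃ a b, M j b a = 1 := by
  by_contra! h
  exact h0 j (Matrix.ext fun b a => (hM j a b).resolve_right (h a b))

lemma IsWord.step {m : Fin r → ℤ} {w : (Fin r → ℤ) → A} (hw : IsWord M m w) {j : Fin r}
    (hj : evec r j ≤ m) : M j (w (evec r j)) (w 0) = 1 := by
  simpa using hw.2 0 j le_rfl (by simpa using hj)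

lemma exists_isWord_add_evec (h1 : H1 M) {m : Fin r → ℤ} {w : (Fin r → ℤ) → A}
    (hw : IsWord M m w) {i : Fin r} {d : A} (hd : M i d (w m) = 1) :
    ∃ w', IsWord M (m + evec r i) w' ∧ AgreeOn m w' w ∧ w' (m + evec r i) = d := by
  obtain ⟨x, hx, hxw, hxv⟩ :=
    (h1 m (evec r i) w _ hw (isWord_edgeWord hd) (edgeWord_zero i _ _).symm).1
  refine ⟨x, hx, hxw, ?_⟩
  simpa [restrictW, add_comm] using hxv (evec r i) (evec_nonneg r i) le_rfl

lemma exists_isWord_of_reflTransGen (h1 : H1 M) {a b : A}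
    (h : Relation.ReflTransGen (fun x y => ∃ i, M i y x = 1) a b) :
    ∃ m w, IsWord M m w ∧ w 0 = a ∧ w m = b := by
  induction h with
  | refl => exact ⟨0, fun _ => a, isWord_const a, rfl, rfl⟩
  | tail _ hcd ih =>
    obtain ⟨m, w, hw, hw0, rfl⟩ := ih
    obtain ⟨i, hi⟩ := hcd
    obtain ⟨w', hw', hagree, hend⟩ := exists_isWord_add_evec h1 hw hi
    exact ⟨m + evec r i, w', hw', by rw [hagree 0 le_rfl hw.1, hw0], hend⟩

/-- Walk to the source of the given edge, extend the walk by it, and read off the first step of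
the resulting word. -/
lemma exists_succ (h1 : H1 M) (h2 : H2 M) {j : Fin r} {a₀ b₀ : A} (hb₀ : M j b₀ a₀ = 1)
    (a : A) : ∃ b, M j b a = 1 := by
  obtain ⟨m, w, hw, rfl, rfl⟩ := exists_isWord_of_reflTransGen h1 (h2 a a₀)
  obtain ⟨w', hw', hagree, -⟩ := exists_isWord_add_evec h1 hw hb₀
  exact ⟨_, hagree 0 le_rfl hw.1 ▸ hw'.step (le_add_of_nonneg_left hw.1)⟩

lemma exists_commuting_square (h1 : H1 M) {i j : Fin r} {a b d : A} (hab : M j b a = 1)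
    (hbd : M i d b = 1) : ∃ c, M i c a = 1 ∧ M j d c = 1 := by
  obtain ⟨w, hw, hagree, hend⟩ := exists_isWord_add_evec h1 (isWord_edgeWord hab) (by simpa)
  have hwi : M i (w (evec r i)) (w 0) = 1 := hw.step (le_add_of_nonneg_left (evec_nonneg r j))
  have hwj : M j (w (evec r i + evec r j)) (w (evec r i)) = 1 := by
    simpa using hw.2 (evec r i) j (evec_nonneg r i) (by rw [add_comm])
  rw [hagree 0 le_rfl (evec_nonneg r j), edgeWord_zero] at hwi
  rw [add_comm, hend] at hwj
  exact ⟨_, hwi, hwj⟩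

def OriginDeterminesWords (M : Fin r → Matrix A A ℤ) : Prop :=
  ∀ (m : Fin r → ℤ) (u u' : (Fin r → ℤ) → A),
    IsWord M m u → IsWord M m u' → u 0 = u' 0 → AgreeOn m u u'

lemma OriginDeterminesWords.eq_of_edge (hdet : OriginDeterminesWords M) {i : Fin r}
    {a b b' : A} (hb : M i b a = 1) (hb' : M i b' a = 1) : b = b' := by
  simpa using hdet _ _ _ (isWord_edgeWord hb) (isWord_edgeWord hb') (by simp)
    (evec r i) (evec_nonneg r i) le_rfl

lemma OriginDeterminesWords.surjective (hdet : OriginDeterminesWords M) (h1 : H1 M)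
    (h2 : H2 M) {j : Fin r} {f : A → A} (hf : ∀ a, M j (f a) a = 1) :
    Function.Surjective f := by
  have image_closed : ∀ b d, Relation.ReflTransGen (fun x y => ∃ i, M i y x = 1) (f b) d →
      ∃ a, f a = d := by
    intro b d hbd
    induction hbd with
    | refl => exact ⟨b, rfl⟩
    | tail _ hcd ih =>
      obtain ⟨a, rfl⟩ := ih
      obtain ⟨i, hi⟩ := hcd
      obtain ⟨c, -, hc⟩ := exists_commuting_square h1 (hf a) hi
      exact ⟨c, hdet.eq_of_edge (hf c) hc⟩
  exact fun b => image_closed b b (h2 (f b) b)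

lemma IsWord.apply_add_nsmul_evec {j : Fin r} {f : A → A}
    (hf : ∀ a b, M j b a = 1 → b = f a) {m : Fin r → ℤ} {w : (Fin r → ℤ) → A}
    (hw : IsWord M m w) {l : Fin r → ℤ} (hl : 0 ≤ l) :
    ∀ n : ℕ, l + (n : ℤ) • evec r j ≤ m → w (l + (n : ℤ) • evec r j) = f^[n] (w l)
  | 0, _ => by simp
  | n + 1, hle => by
    have hsplit : l + ((n + 1 : ℕ) : ℤ) • evec r j = l + (n : ℤ) • evec r j + evec r j := by
      push_cast
      rw [add_smul, one_smul, add_assoc]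
    have hnonneg : 0 ≤ l + (n : ℤ) • evec r j :=
      add_nonneg hl (smul_nonneg (Int.natCast_nonneg n) (evec_nonneg r j))
    rw [hsplit] at hle ⊢
    rw [hf _ _ (hw.2 _ j hnonneg hle),
      hw.apply_add_nsmul_evec hf hl n (le_trans (le_add_of_nonneg_right (evec_nonneg r j)) hle),
      Function.iterate_succ_apply']

lemma IsWord.isPeriodic_of_iterate_eq_id {j : Fin r} {f : A → A}
    (hf : ∀ a b, M j b a = 1 → b = f a) {c : ℕ} (hc : f^[c] = id) {m : Fin r → ℤ}
    {w : (Fin r → ℤ) → A} (hw : IsWord M m w) : IsPeriodic ((c : ℤ) • evec r j) m w := by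
  intro x _ hxm hpx _
  have h := hw.apply_add_nsmul_evec hf (sub_nonneg.mpr hpx) c (by rwa [sub_add_cancel])
  rw [sub_add_cancel, hc] at h
  exact h.symm

end Words

theorem stmt_14_general [Fintype A] (hr : 0 < r)
    (M : Fin r → Matrix A A ℤ)
    (hM : ∀ j (a b : A), M j b a = 0 ∨ M j b a = 1)
    (h0 : H0 M) (h1 : H1 M) (h2 : H2 M) (h3 : H3 M) :
    ∃ (m : Fin r → ℤ) (u u' : (Fin r → ℤ) → A),
      IsWord M m u ∧ IsWord M m u' ∧ u 0 = u' 0 ∧ ¬ AgreeOn m u u' := by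
  by_contra! hdet
  change OriginDeterminesWords M at hdet
  let j : Fin r := ⟨0, hr⟩
  obtain ⟨a₀, b₀, hb₀⟩ := exists_entry_eq_one hM h0 j
  choose f hf using exists_succ h1 h2 hb₀
  have hf_unique : ∀ a b, M j b a = 1 → b = f a := fun a b h => hdet.eq_of_edge h (hf a)
  have hf_surj := hdet.surjective h1 h2 hf
  let σ : Equiv.Perm A := Equiv.ofBijective f ⟨Finite.injective_iff_surjective.mpr hf_surj, hf_surj⟩
  have hc : f^[orderOf σ] = id := by
    change (⇑σ)^[orderOf σ] = id
    rw [← Equiv.Perm.coe_pow, pow_orderOf_eq_one]; rfl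
  obtain ⟨m, w, hw, hnp⟩ :=
    h3 _ (smul_evec_ne_zero (Int.natCast_ne_zero.mpr (orderOf_pos σ).ne') j)
  exact hnp (hw.isPeriodic_of_iterate_eq_id hf_unique hc)

/-- under (H0)-(H3), there are two distinct words `u, u'` of the
same shape and with the same origin. -/
theorem stmt_14 [Fintype A] [Nonempty A] (hr : 0 < r)
    (M : Fin r → Matrix A A ℤ)
    (hM : ∀ j (a b : A), M j b a = 0 ∨ M j b a = 1)
    (h0 : H0 M) (h1 : H1 M) (h2 : H2 M) (h3 : H3 M) :
    ∃ (m : Fin r → ℤ) (u u' : (Fin r → ℤ) → A),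
      IsWord M m u ∧ IsWord M m u' ∧ u 0 = u' 0 ∧ ¬ AgreeOn m u u' :=
  stmt_14_general hr M hM h0 h1 h2 h3
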